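/- Let R = R_1 × R_2 be a product of finite rings, let f be a polynomial with integer coefficients and zero constant term in d-1 variables, c an integer, and let C_R, C_{R_1}, C_{R_2} denote the smallest constants such that V_{f,c}(R), V_{f,c}(R_1), V_{f,c}(R_2) are respectively C-Salem. Then C_R = max(C_{R_1}·|V_{f,c}(R_2)|^{1/2}, C_{R_2}·|V_{f,c}(R_1)|^{1/2}). -/

import Mathlib

/-!
The characters of `A × B` are the products `ψ₁ ⊗ ψ₂`, and the character sum over `S × T`
factors as the product of the sums over `S` and `T`. A nontrivial `ψ₁ ⊗ ψ₂` has a nontrivial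
factor; bounding that one by its Salem constant and the other trivially by `|·|^{1/2}` gives `≤`,
and the characters `ψ₁ ⊗ 1`, `1 ⊗ ψ₂` give `≥`. Finally, regrouping coordinates identifies
`V_{f,c}(R₁ × R₂)` with `V_{f,c}(R₁) × V_{f,c}(R₂)`, because evaluating `f` commutes with
the projections `R₁ × R₂ → Rᵢ`.
-/

open Finset

noncomputable def salemConst {G : Type} [AddCommGroup G] [Fintype G] (S : Finset G) : ℝ :=
  sSup {r : ℝ | ∃ ψ : AddChar G ℂ, ψ ≠ 1 ∧
    r = ‖∑ x ∈ S, ψ x‖ / (S.card : ℝ) ^ ((1 : ℝ) / 2)}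

namespace AddChar

variable {A B : Type} [AddCommGroup A] [AddCommGroup B]

lemma compAddMonoidHom_ne_one {ψ : AddChar B ℂ} (hψ : ψ ≠ 1) {f : A →+ B}
    (hf : Function.Surjective f) : ψ.compAddMonoidHom f ≠ 1 :=
  fun h ↦ hψ <| compAddMonoidHom_injective_left f hf (h.trans rfl)

lemma apply_eq_mul_inl_inr (ψ : AddChar (A × B) ℂ) (x : A × B) :
    ψ x = ψ (x.1, 0) * ψ (0, x.2) := by
  rw [← map_add_eq_mul, Prod.mk_add_mk, add_zero, zero_add]

lemma eq_one_of_compAddMonoidHom_inl_inr {ψ : AddChar (A × B) ℂ}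
    (h₁ : ψ.compAddMonoidHom (AddMonoidHom.inl A B) = 1)
    (h₂ : ψ.compAddMonoidHom (AddMonoidHom.inr A B) = 1) : ψ = 1 := by
  ext x
  rw [apply_eq_mul_inl_inr, one_apply]
  simpa using congr($h₁ x.1 * $h₂ x.2)

end AddChar

section Salem

variable {A B : Type} [AddCommGroup A] [AddCommGroup B]

noncomputable def charSumRatio (S : Finset A) (ψ : AddChar A ℂ) : ℝ :=
  ‖∑ x ∈ S, ψ x‖ / √(#S : ℝ)

lemma charSumRatio_nonneg (S : Finset A) (ψ : AddChar A ℂ) : 0 ≤ charSumRatio S ψ := by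
  unfold charSumRatio; positivity

lemma charSumRatio_le_sqrt_card [Finite A] (S : Finset A) (ψ : AddChar A ℂ) :
    charSumRatio S ψ ≤ √(#S : ℝ) := by
  have hsum : ‖∑ x ∈ S, ψ x‖ ≤ #S := by
    simpa using norm_sum_le S ψ
  calc charSumRatio S ψ ≤ #S / √(#S : ℝ) := by unfold charSumRatio; gcongr
    _ = √(#S : ℝ) := Real.div_sqrt

lemma charSumRatio_one (S : Finset A) : charSumRatio S 1 = √(#S : ℝ) := by
  simp [charSumRatio, Real.div_sqrt]

lemma charSumRatio_map (e : A ≃+ B) (S : Finset A) (ψ : AddChar B ℂ) :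
    charSumRatio (S.map e.toEquiv.toEmbedding) ψ
      = charSumRatio S (ψ.compAddMonoidHom e.toAddMonoidHom) := by
  simp [charSumRatio, sum_map]

lemma charSumRatio_product (S : Finset A) (T : Finset B) (ψ : AddChar (A × B) ℂ) :
    charSumRatio (S ×ˢ T) ψ
      = charSumRatio S (ψ.compAddMonoidHom (AddMonoidHom.inl A B))
        * charSumRatio T (ψ.compAddMonoidHom (AddMonoidHom.inr A B)) := by
  have hsum : ∑ x ∈ S ×ˢ T, ψ x = (∑ a ∈ S, ψ (a, 0)) * ∑ b ∈ T, ψ (0, b) := by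
    rw [sum_product, sum_mul_sum]
    exact sum_congr rfl fun a _ ↦ sum_congr rfl fun b _ ↦ ψ.apply_eq_mul_inl_inr (a, b)
  simp only [charSumRatio, hsum, card_product, Nat.cast_mul, Real.sqrt_mul (Nat.cast_nonneg _),
    norm_mul, mul_div_mul_comm]
  rfl

variable [Fintype A] [Fintype B]

lemma salemConst_eq_sSup_charSumRatio (S : Finset A) :
    salemConst S = sSup {r | ∃ ψ : AddChar A ℂ, ψ ≠ 1 ∧ r = charSumRatio S ψ} := by
  simp only [salemConst, charSumRatio, Real.sqrt_eq_rpow]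

lemma charSumRatio_le_salemConst (S : Finset A) {ψ : AddChar A ℂ} (hψ : ψ ≠ 1) :
    charSumRatio S ψ ≤ salemConst S := by
  rw [salemConst_eq_sSup_charSumRatio]
  refine le_csSup ⟨√(#S : ℝ), ?_⟩ ⟨ψ, hψ, rfl⟩
  rintro r ⟨φ, -, rfl⟩
  exact charSumRatio_le_sqrt_card S φ

lemma salemConst_le {S : Finset A} {C : ℝ} (hC : 0 ≤ C)
    (h : ∀ ψ : AddChar A ℂ, ψ ≠ 1 → charSumRatio S ψ ≤ C) : salemConst S ≤ C := by
  rw [salemConst_eq_sSup_charSumRatio]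
  refine Real.sSup_le ?_ hC
  rintro r ⟨ψ, hψ, rfl⟩
  exact h ψ hψ

lemma salemConst_nonneg (S : Finset A) : 0 ≤ salemConst S := by
  rw [salemConst_eq_sSup_charSumRatio]
  refine Real.sSup_nonneg ?_
  rintro r ⟨ψ, -, rfl⟩
  exact charSumRatio_nonneg S ψ

lemma salemConst_map_addEquiv (e : A ≃+ B) (S : Finset A) :
    salemConst (S.map e.toEquiv.toEmbedding) = salemConst S := by
  refine le_antisymm (salemConst_le (salemConst_nonneg S) fun ψ hψ ↦ ?_)
    (salemConst_le (salemConst_nonneg _) fun ψ hψ ↦ ?_)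
  · rw [charSumRatio_map]
    exact charSumRatio_le_salemConst S (ψ.compAddMonoidHom_ne_one hψ e.surjective)
  · have hψe :
        ψ = (ψ.compAddMonoidHom e.symm.toAddMonoidHom).compAddMonoidHom e.toAddMonoidHom := by
      ext; simp
    rw [hψe, ← charSumRatio_map]
    exact charSumRatio_le_salemConst _ (ψ.compAddMonoidHom_ne_one hψ e.symm.surjective)

lemma salemConst_product_comm (S : Finset A) (T : Finset B) :
    salemConst (T ×ˢ S) = salemConst (S ×ˢ T) := by
  rw [← salemConst_map_addEquiv (AddEquiv.prodComm) (T ×ˢ S)]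
  exact congrArg salemConst (map_swap_product S T)

lemma salemConst_product_le (S : Finset A) (T : Finset B) :
    salemConst (S ×ˢ T) ≤ max (salemConst S * √(#T : ℝ)) (salemConst T * √(#S : ℝ)) := by
  refine salemConst_le (le_max_of_le_left (by positivity [salemConst_nonneg S])) fun ψ hψ ↦ ?_
  rw [charSumRatio_product]
  by_cases h₁ : ψ.compAddMonoidHom (AddMonoidHom.inl A B) = 1
  · have h₂ : ψ.compAddMonoidHom (AddMonoidHom.inr A B) ≠ 1 :=
      fun h₂ ↦ hψ (ψ.eq_one_of_compAddMonoidHom_inl_inr h₁ h₂)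
    rw [mul_comm]
    exact le_max_of_le_right (mul_le_mul (charSumRatio_le_salemConst T h₂)
      (charSumRatio_le_sqrt_card S _) (charSumRatio_nonneg S _) (salemConst_nonneg T))
  · exact le_max_of_le_left (mul_le_mul (charSumRatio_le_salemConst S h₁)
      (charSumRatio_le_sqrt_card T _) (charSumRatio_nonneg T _) (salemConst_nonneg S))

lemma salemConst_mul_sqrt_card_le (S : Finset A) (T : Finset B) :
    salemConst S * √(#T : ℝ) ≤ salemConst (S ×ˢ T) := by
  obtain rfl | hT := T.eq_empty_or_nonempty
  · simpa using salemConst_nonneg _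
  have hsqrt : 0 < √(#T : ℝ) := Real.sqrt_pos.2 (by exact_mod_cast hT.card_pos)
  rw [← le_div_iff₀ hsqrt]
  refine salemConst_le (by positivity [salemConst_nonneg (S ×ˢ T)]) fun ψ hψ ↦ ?_
  set φ := ψ.compAddMonoidHom (AddMonoidHom.fst A B)
  have hφ : charSumRatio (S ×ˢ T) φ = charSumRatio S ψ * √(#T : ℝ) := by
    rw [charSumRatio_product, ← charSumRatio_one T]
    congr
    ext
    simp [φ]
  rw [le_div_iff₀ hsqrt, ← hφ]
  exact charSumRatio_le_salemConst _ (ψ.compAddMonoidHom_ne_one hψ Prod.fst_surjective)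

theorem salemConst_product (S : Finset A) (T : Finset B) :
    salemConst (S ×ˢ T) = max (salemConst S * √(#T : ℝ)) (salemConst T * √(#S : ℝ)) := by
  refine le_antisymm (salemConst_product_le S T) (max_le (salemConst_mul_sqrt_card_le S T) ?_)
  rw [← salemConst_product_comm]
  exact salemConst_mul_sqrt_card_le T S

end Salem

lemma FreeAlgebra.map_lift_int {ι R R' : Type*} [Ring R] [Ring R'] (g : R →+* R')
    (v : ι → R) (p : FreeAlgebra ℤ ι) : g (lift ℤ v p) = lift ℤ (g ∘ v) p := by
  have h : g.toIntAlgHom.comp (lift ℤ v) = lift ℤ (g ∘ v) := hom_ext (by ext; simp)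
  exact congr($h p)

section Graph

def AddEquiv.arrowProdProdComm (ι R₁ R₂ : Type) [AddCommGroup R₁] [AddCommGroup R₂] :
    ((ι → R₁ × R₂) × (R₁ × R₂)) ≃+ ((ι → R₁) × R₁) × ((ι → R₂) × R₂) where
  toFun x := ((fun i ↦ (x.1 i).1, x.2.1), (fun i ↦ (x.1 i).2, x.2.2))
  invFun y := (fun i ↦ (y.1.1 i, y.2.1 i), (y.1.2, y.2.2))
  left_inv _ := rfl
  right_inv _ := rfl
  map_add' _ _ := rfl

variable {ι : Type} [Fintype ι] [DecidableEq ι]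

/-- The set `V_{f,c}(R)`, with `f` given as an element `p` of the free `ℤ`-algebra. -/
def polyGraph (R : Type) [Ring R] [Fintype R] [DecidableEq R] (p : FreeAlgebra ℤ ι) (c : ℤ) :
    Finset ((ι → R) × R) :=
  univ.filter fun x ↦ x.2 = FreeAlgebra.lift ℤ x.1 p + c

lemma map_polyGraph_prod (R₁ R₂ : Type) [Ring R₁] [Fintype R₁] [DecidableEq R₁]
    [Ring R₂] [Fintype R₂] [DecidableEq R₂] (p : FreeAlgebra ℤ ι) (c : ℤ) :
    (polyGraph (R₁ × R₂) p c).map (AddEquiv.arrowProdProdComm ι R₁ R₂).toEquiv.toEmbedding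
      = polyGraph R₁ p c ×ˢ polyGraph R₂ p c := by
  ext y
  rw [mem_map_equiv, mem_product]
  simp only [polyGraph, mem_filter, mem_univ, true_and]
  have h₁ (v : ι → R₁ × R₂) := FreeAlgebra.map_lift_int (RingHom.fst R₁ R₂) v p
  have h₂ (v : ι → R₁ × R₂) := FreeAlgebra.map_lift_int (RingHom.snd R₁ R₂) v p
  rw [Prod.ext_iff, Prod.fst_add, Prod.snd_add, Prod.fst_intCast, Prod.snd_intCast]
  simp only [RingHom.coe_fst, RingHom.coe_snd] at h₁ h₂
  rw [h₁, h₂]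
  rfl

end Graph

theorem stmt9_general {R₁ R₂ : Type} [Ring R₁] [Fintype R₁] [DecidableEq R₁]
    [Ring R₂] [Fintype R₂] [DecidableEq R₂] (d : ℕ)
    (p : FreeAlgebra ℤ (Fin (d - 1))) (c : ℤ) :
    salemConst (Finset.univ.filter (fun x : (Fin (d - 1) → R₁ × R₂) × (R₁ × R₂) =>
        x.2 = FreeAlgebra.lift ℤ x.1 p + (c : R₁ × R₂)))
      = max
        (salemConst (Finset.univ.filter (fun x : (Fin (d - 1) → R₁) × R₁ =>
            x.2 = FreeAlgebra.lift ℤ x.1 p + (c : R₁))) *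
          ((Finset.univ.filter (fun x : (Fin (d - 1) → R₂) × R₂ =>
            x.2 = FreeAlgebra.lift ℤ x.1 p + (c : R₂))).card : ℝ) ^ ((1 : ℝ) / 2))
        (salemConst (Finset.univ.filter (fun x : (Fin (d - 1) → R₂) × R₂ =>
            x.2 = FreeAlgebra.lift ℤ x.1 p + (c : R₂))) *
          ((Finset.univ.filter (fun x : (Fin (d - 1) → R₁) × R₁ =>
            x.2 = FreeAlgebra.lift ℤ x.1 p + (c : R₁))).card : ℝ) ^ ((1 : ℝ) / 2)) := by
  have h := salemConst_product (polyGraph R₁ p c) (polyGraph R₂ p c)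
  rw [← map_polyGraph_prod, salemConst_map_addEquiv] at h
  simp only [Real.sqrt_eq_rpow] at h
  exact h

/-- For a product `R = R₁ × R₂` of finite rings and `V_{f,c}` the graph of an integer
polynomial `f` (zero constant term) shifted by an integer `c`, the Salem constants satisfy
`C_R = max(C_{R₁}·|V_{f,c}(R₂)|^{1/2}, C_{R₂}·|V_{f,c}(R₁)|^{1/2})`. -/
theorem stmt9 {R₁ R₂ : Type} [Ring R₁] [Fintype R₁] [DecidableEq R₁]
    [Ring R₂] [Fintype R₂] [DecidableEq R₂] (d : ℕ) (hd : 2 ≤ d)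
    (p : FreeAlgebra ℤ (Fin (d - 1)))
    (hp : FreeAlgebra.lift ℤ (fun _ : Fin (d - 1) => (0 : ℤ)) p = 0) (c : ℤ) :
    salemConst (Finset.univ.filter (fun x : (Fin (d - 1) → R₁ × R₂) × (R₁ × R₂) =>
        x.2 = FreeAlgebra.lift ℤ x.1 p + (c : R₁ × R₂)))
      = max
        (salemConst (Finset.univ.filter (fun x : (Fin (d - 1) → R₁) × R₁ =>
            x.2 = FreeAlgebra.lift ℤ x.1 p + (c : R₁))) *
          ((Finset.univ.filter (fun x : (Fin (d - 1) → R₂) × R₂ =>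
            x.2 = FreeAlgebra.lift ℤ x.1 p + (c : R₂))).card : ℝ) ^ ((1 : ℝ) / 2))
        (salemConst (Finset.univ.filter (fun x : (Fin (d - 1) → R₂) × R₂ =>
            x.2 = FreeAlgebra.lift ℤ x.1 p + (c : R₂))) *
          ((Finset.univ.filter (fun x : (Fin (d - 1) → R₁) × R₁ =>
            x.2 = FreeAlgebra.lift ℤ x.1 p + (c : R₁))).card : ℝ) ^ ((1 : ℝ) / 2)) :=
  stmt9_general d p c
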